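/- arXiv:2404.18056 — 3 statements merged into one kernel-verified Lean document; each statement's English description precedes it below -/
import Mathlib

section
/- Let a = (-1+√13)/6. Then 2a³ - a² < 0 and for every real u, e^{-4au}(2a³-a²) + e^{4au}(2a³-a²) + 2a² - 12a³ < 0; consequently Δf(u) = 4e^{-6au}(e^{-4au}(2a³-a²)+e^{4au}(2a³-a²)+2a²-12a³)/(1+e^{-4au})³ < 0 for all u. -/
theorem stmt_5 (a : ℝ) (ha : a = (-1 + Real.sqrt 13) / 6) :
    2 * a ^ 3 - a ^ 2 < 0 ∧
    (∀ u : ℝ,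
      Real.exp (-4 * a * u) * (2 * a ^ 3 - a ^ 2)
        + Real.exp (4 * a * u) * (2 * a ^ 3 - a ^ 2)
        + 2 * a ^ 2 - 12 * a ^ 3 < 0) ∧
    (∀ u : ℝ,
      4 * Real.exp (-6 * a * u)
          * (Real.exp (-4 * a * u) * (2 * a ^ 3 - a ^ 2)
            + Real.exp (4 * a * u) * (2 * a ^ 3 - a ^ 2)
            + 2 * a ^ 2 - 12 * a ^ 3)
          / (1 + Real.exp (-4 * a * u)) ^ 3 < 0) := by
  have hs : (3:ℝ) < Real.sqrt 13 := by
    have : (3:ℝ) = Real.sqrt 9 := by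
      rw [show (9:ℝ) = 3^2 by norm_num, Real.sqrt_sq (by norm_num)]
    rw [this]
    exact Real.sqrt_lt_sqrt (by norm_num) (by norm_num)
  have hs' : Real.sqrt 13 < 4 := by
    have : (4:ℝ) = Real.sqrt 16 := by
      rw [show (16:ℝ) = 4^2 by norm_num, Real.sqrt_sq (by norm_num)]
    rw [this]
    exact Real.sqrt_lt_sqrt (by norm_num) (by norm_num)
  have ha0 : 0 < a := by rw [ha]; linarith
  have ha2 : 2 * a < 1 := by rw [ha]; linarith
  have ha6 : 1 / 6 < a := by rw [ha]; linarith
  have h1 : 2 * a ^ 3 - a ^ 2 < 0 := by nlinarith [sq_nonneg a, mul_pos ha0 ha0]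
  have h2 : ∀ u : ℝ,
      Real.exp (-4 * a * u) * (2 * a ^ 3 - a ^ 2)
        + Real.exp (4 * a * u) * (2 * a ^ 3 - a ^ 2)
        + 2 * a ^ 2 - 12 * a ^ 3 < 0 := by
    intro u
    have e1 := Real.exp_pos (-4 * a * u)
    have e2 := Real.exp_pos (4 * a * u)
    have h3 : 2 * a ^ 2 - 12 * a ^ 3 < 0 := by nlinarith [mul_pos ha0 ha0]
    nlinarith [mul_pos e1 (neg_pos.mpr h1), mul_pos e2 (neg_pos.mpr h1)]
  refine ⟨h1, h2, fun u => ?_⟩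
  have e1 := Real.exp_pos (-4 * a * u)
  apply div_neg_of_neg_of_pos
  · have := h2 u
    nlinarith [Real.exp_pos (-6 * a * u)]
  · positivity
end

section
/- Consider the ODE y(3g+1)·(dg/dy) + 3g² + g - 1 = 0 for g = g(y) with 3g² + g - 1 ≠ 0. Any solution satisfies the implicit relation (y(g - a₁))^{6a₂} = c·(y(g - a₂))^{6a₁} for some positive constant c, where a₁,₂ = (-1±√13)/6. Equivalently, the function y ↦ (y(g(y)-a₁))^{6a₂}/(y(g(y)-a₂))^{6a₁} is constant on any interval where it is defined (y > 0, g - a₁ > 0, g - a₂ > 0). -/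
theorem stmt_8 (a₁ a₂ : ℝ)
    (ha₁ : a₁ = (-1 + Real.sqrt 13) / 6) (ha₂ : a₂ = (-1 - Real.sqrt 13) / 6)
    (c d : ℝ) (g : ℝ → ℝ)
    (hdiff : ∀ y ∈ Set.Ioo c d, DifferentiableAt ℝ g y)
    (hpos : ∀ y ∈ Set.Ioo c d, 0 < y)
    (h₁ : ∀ y ∈ Set.Ioo c d, 0 < g y - a₁)
    (h₂ : ∀ y ∈ Set.Ioo c d, 0 < g y - a₂)
    (hne : ∀ y ∈ Set.Ioo c d, 3 * g y ^ 2 + g y - 1 ≠ 0)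
    (hode : ∀ y ∈ Set.Ioo c d,
      y * (3 * g y + 1) * deriv g y + 3 * g y ^ 2 + g y - 1 = 0) :
    ∀ y ∈ Set.Ioo c d, ∀ z ∈ Set.Ioo c d,
      (y * (g y - a₁)) ^ (6 * a₂) / (y * (g y - a₂)) ^ (6 * a₁)
        = (z * (g z - a₁)) ^ (6 * a₂) / (z * (g z - a₂)) ^ (6 * a₁) := by
  have h13 : Real.sqrt 13 * Real.sqrt 13 = 13 := Real.mul_self_sqrt (by norm_num)
  have hsum : a₁ + a₂ = -1/3 := by rw [ha₁, ha₂]; ring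
  have hprod : a₁ * a₂ = -1/3 := by
    rw [ha₁, ha₂]; linear_combination (-(1:ℝ)/36) * h13
  set φ : ℝ → ℝ := fun y =>
    6 * a₂ * Real.log (y * (g y - a₁)) - 6 * a₁ * Real.log (y * (g y - a₂)) with hφdef
  -- φ has derivative 0 on the interval
  have hderiv : ∀ x ∈ Set.Ioo c d, HasDerivAt φ 0 x := by
    intro x hx
    have hx0 : (0:ℝ) < x := hpos x hx
    have hu : 0 < g x - a₁ := h₁ x hx
    have hv : 0 < g x - a₂ := h₂ x hx
    have hg : HasDerivAt g (deriv g x) x := (hdiff x hx).hasDerivAt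
    have hA : HasDerivAt (fun y => y * (g y - a₁)) ((g x - a₁) + x * deriv g x) x := by
      have := (hasDerivAt_id x).mul (hg.sub_const a₁)
      simpa [Pi.mul_def] using this
    have hB : HasDerivAt (fun y => y * (g y - a₂)) ((g x - a₂) + x * deriv g x) x := by
      have := (hasDerivAt_id x).mul (hg.sub_const a₂)
      simpa [Pi.mul_def] using this
    have hlogA : HasDerivAt (fun y => Real.log (y * (g y - a₁)))
        (((g x - a₁) + x * deriv g x) / (x * (g x - a₁))) x :=
      hA.log (by positivity)
    have hlogB : HasDerivAt (fun y => Real.log (y * (g y - a₂)))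
        (((g x - a₂) + x * deriv g x) / (x * (g x - a₂))) x :=
      hB.log (by positivity)
    have hφ : HasDerivAt φ
        (6 * a₂ * (((g x - a₁) + x * deriv g x) / (x * (g x - a₁)))
          - 6 * a₁ * (((g x - a₂) + x * deriv g x) / (x * (g x - a₂)))) x :=
      (hlogA.const_mul (6 * a₂)).sub (hlogB.const_mul (6 * a₁))
    have hs : (3 * g x + 1) ≠ 0 := by
      intro h
      apply hne x hx
      have ho := hode x hx
      rw [h] at ho
      linarith [ho]
    have hkey : (3 * g x + 1) *
        (6 * a₂ * (((g x - a₁) + x * deriv g x) / (x * (g x - a₁)))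
          - 6 * a₁ * (((g x - a₂) + x * deriv g x) / (x * (g x - a₂)))) = 0 := by
      have ho := hode x hx
      have e : (3 * g x + 1) *
          (6 * a₂ * (((g x - a₁) + x * deriv g x) / (x * (g x - a₁)))
            - 6 * a₁ * (((g x - a₂) + x * deriv g x) / (x * (g x - a₂))))
          = (3 * g x + 1) * (6 * a₂ * ((g x - a₁) + x * deriv g x) * (g x - a₂)
              - 6 * a₁ * ((g x - a₂) + x * deriv g x) * (g x - a₁))
            / (x * (g x - a₁) * (g x - a₂)) := by
        rw [eq_div_iff (by positivity)]
        field_simp <;> ring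
      rw [e, div_eq_zero_iff]
      left
      linear_combination (6 * (a₂ * (g x - a₂) - a₁ * (g x - a₁))) * ho +
        (6 * (a₂ - a₁) * (3 * g x + 1)) * hprod - (6 * (a₂ - a₁)) * hsum
    have hz : (6 * a₂ * (((g x - a₁) + x * deriv g x) / (x * (g x - a₁)))
          - 6 * a₁ * (((g x - a₂) + x * deriv g x) / (x * (g x - a₂)))) = 0 :=
      (mul_eq_zero.mp hkey).resolve_left hs
    rwa [hz] at hφ
  -- φ is constant on the interval
  have hconst : ∀ y ∈ Set.Ioo c d, ∀ z ∈ Set.Ioo c d, φ y = φ z := by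
    intro y hy z hz
    apply (convex_Ioo c d).is_const_of_fderivWithin_eq_zero
      (fun x hx => ((hderiv x hx).differentiableAt).differentiableWithinAt)
      _ hy hz
    intro x hx
    have := ((hderiv x hx).hasFDerivAt).hasFDerivWithinAt.fderivWithin
      (isOpen_Ioo.uniqueDiffWithinAt hx)
    rw [this]
    ext
    simp
  intro y hy z hz
  have key : ∀ w ∈ Set.Ioo c d,
      (w * (g w - a₁)) ^ (6 * a₂) / (w * (g w - a₂)) ^ (6 * a₁) = Real.exp (φ w) := by
    intro w hw
    have hA : 0 < w * (g w - a₁) := mul_pos (hpos w hw) (h₁ w hw)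
    have hB : 0 < w * (g w - a₂) := mul_pos (hpos w hw) (h₂ w hw)
    rw [Real.rpow_def_of_pos hA, Real.rpow_def_of_pos hB, ← Real.exp_sub]
    congr 1
    simp only [hφdef]
    ring
  rw [key y hy, key z hz, hconst y hy z hz]
end

section
/- Let a = (-1+√13)/6 and define f(u) = 2a e^{-2au}/(1+e^{-4au}), θ(u) = 2 arctan(e^{-2au}). Then f, θ satisfy the biconservative equation 3f(u)f'(u) + f'(u)·sin θ(u) + f(u)·sin(2θ(u)) = 0 and θ'(u) = -2f(u) for all real u. -/
lemma sin_two_arctan (x : ℝ) : Real.sin (2 * Real.arctan x) = 2 * x / (1 + x ^ 2) := by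
  have h : (0:ℝ) < 1 + x ^ 2 := by positivity
  rw [Real.sin_two_mul, Real.sin_arctan, Real.cos_arctan]
  have hs : Real.sqrt (1 + x ^ 2) ≠ 0 := by positivity
  field_simp
  rw [Real.sq_sqrt h.le]

lemma cos_two_arctan (x : ℝ) : Real.cos (2 * Real.arctan x) = (1 - x ^ 2) / (1 + x ^ 2) := by
  have h : (0:ℝ) < 1 + x ^ 2 := by positivity
  rw [Real.cos_two_mul, Real.cos_arctan]
  rw [div_pow, one_pow, Real.sq_sqrt (by positivity : (0:ℝ) ≤ 1 + x ^ 2)]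
  field_simp
  ring

theorem stmt_14 (a : ℝ) (ha : a = (-1 + Real.sqrt 13) / 6)
    (f θ : ℝ → ℝ)
    (hf : ∀ u, f u = 2 * a * Real.exp (-2 * a * u) / (1 + Real.exp (-4 * a * u)))
    (hθ : ∀ u, θ u = 2 * Real.arctan (Real.exp (-2 * a * u))) :
    ∀ u : ℝ,
      3 * f u * deriv f u + deriv f u * Real.sin (θ u)
          + f u * Real.sin (2 * θ u) = 0 ∧
      deriv θ u = -2 * f u := by
  have hs : Real.sqrt 13 ^ 2 = 13 := Real.sq_sqrt (by norm_num)
  have hrel : 3 * a ^ 2 + a = 1 := by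
    subst ha; nlinarith [hs]
  intro u
  set x : ℝ := Real.exp (-2 * a * u) with hx
  have hxpos : 0 < x := Real.exp_pos _
  have hx2 : Real.exp (-4 * a * u) = x ^ 2 := by
    rw [hx, ← Real.exp_nat_mul]
    norm_num
    ring_nf
  have hden : 0 < 1 + x ^ 2 := by positivity
  -- derivative of inner exponentials
  have h1 : HasDerivAt (fun u : ℝ => Real.exp (-2 * a * u)) (Real.exp (-2 * a * u) * (-2 * a)) u := by
    have := ((hasDerivAt_id u).const_mul (-2 * a)).exp
    simpa using this
  have h2 : HasDerivAt (fun u : ℝ => Real.exp (-4 * a * u)) (Real.exp (-4 * a * u) * (-4 * a)) u := by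
    have := ((hasDerivAt_id u).const_mul (-4 * a)).exp
    simpa using this
  -- derivative of f
  have hfd : HasDerivAt f
      ((2 * a * (Real.exp (-2 * a * u) * (-2 * a)) * (1 + Real.exp (-4 * a * u))
        - 2 * a * Real.exp (-2 * a * u) * (Real.exp (-4 * a * u) * (-4 * a)))
        / (1 + Real.exp (-4 * a * u)) ^ 2) u := by
    have hne : (1 + Real.exp (-4 * a * u)) ≠ 0 := by positivity
    have := ((h1.const_mul (2 * a)).div (h2.const_add 1) hne)
    have heq : f = fun u => 2 * a * Real.exp (-2 * a * u) / (1 + Real.exp (-4 * a * u)) :=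
      funext hf
    rw [heq]
    exact this
  -- derivative of θ
  have hθd : HasDerivAt θ
      (2 * (Real.exp (-2 * a * u) * (-2 * a) / (1 + Real.exp (-2 * a * u) ^ 2))) u := by
    have := (h1.arctan).const_mul 2
    have heq : θ = fun u => 2 * Real.arctan (Real.exp (-2 * a * u)) := funext hθ
    rw [heq]
    exact this.congr_deriv (by ring)
  have hdf : deriv f u = (2 * a * (x * (-2 * a)) * (1 + x ^ 2)
        - 2 * a * x * (x ^ 2 * (-4 * a))) / (1 + x ^ 2) ^ 2 := by
    rw [hfd.deriv, hx2, ← hx]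
  have hdθ : deriv θ u = 2 * (x * (-2 * a) / (1 + x ^ 2)) := by
    rw [hθd.deriv, ← hx]
  have hfu : f u = 2 * a * x / (1 + x ^ 2) := by rw [hf u, hx2, ← hx]
  have hθu : θ u = 2 * Real.arctan x := by rw [hθ u, ← hx]
  constructor
  · have hsin : Real.sin (θ u) = 2 * x / (1 + x ^ 2) := by
      rw [hθu, sin_two_arctan]
    have hsin2 : Real.sin (2 * θ u) = 2 * (2 * x / (1 + x ^ 2)) * ((1 - x ^ 2) / (1 + x ^ 2)) := by
      rw [hθu, show (2 : ℝ) * (2 * Real.arctan x) = 2 * (2 * Real.arctan x) by ring,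
        Real.sin_two_mul, sin_two_arctan, cos_two_arctan]
    have key : a - a ^ 2 * (3 * a + 1) = 0 := by linear_combination (-a) * hrel
    have hne : (1 + x ^ 2) ≠ 0 := ne_of_gt hden
    have expand : 3 * f u * deriv f u + deriv f u * Real.sin (θ u)
          + f u * Real.sin (2 * θ u)
        = (8 * x ^ 2 * (1 - x ^ 2) / (1 + x ^ 2) ^ 3) * (a - a ^ 2 * (3 * a + 1)) := by
      rw [hdf, hfu, hsin, hsin2]
      field_simp
      ring
    rw [expand, key, mul_zero]
  · rw [hdθ, hfu]
    ring
end
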